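/- For every word w ∈ X⁺, w = f̌(w) in T; that is, the pair (w, f̌(w)) belongs to the congruence ρ_R on X⁺. -/

import Mathlib

open List

variable {A : Type*} {G : Type*} {A_G : Type*}

/-- `L̈`: the words not in `L` whose maximal proper prefix and suffix are in `L`. -/
def Ddot (L : Set (List A)) : Set (List A) :=
  {v | v ∉ L ∧ v.dropLast ∈ L ∧ v.tail ∈ L}

/-- `IsSc L w s` : `s` is the sequence of coordinates of `w` determined by `L`,
via the recursive construction of the paper: if `w ∈ L` then `s = (w)`; otherwise
select an occurrence `w = w' v w''` of a factor `v ∈ L̈` and put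
`s = sc_L[w' v_α] (v) sc_L[v_ω w'']`. -/
inductive IsSc (L : Set (List A)) : List A → List (List A) → Prop
  | base (w : List A) (hw : w ∈ L) : IsSc L w [w]
  | step (w' w'' v : List A) (s₁ s₂ : List (List A)) (hv : v ∈ Ddot L)
      (h₁ : IsSc L (w' ++ v.dropLast) s₁) (h₂ : IsSc L (v.tail ++ w'') s₂) :
      IsSc L (w' ++ v ++ w'') (s₁ ++ v :: s₂)

open Classical in
/-- `sc_L[w]`, the sequence of coordinates of `w` determined by `L`. -/
noncomputable def scL (L : Set (List A)) (w : List A) : List (List A) :=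
  if h : ∃ s, IsSc L w s then h.choose else []
section CoreG
variable [Group G]

/-- Evaluation of a word over `A_G` in the group `G`. -/
def evalW (evA : A_G → G) (u : List A_G) : G := (u.map evA).prod

/-- `f̂ : A* → G`. -/
noncomputable def fhat (L : Set (List A)) (f : List A → G) (w : List A) : G :=
  ((scL L w).map f).prod

/-- first coordinate (word part of `f̀`). -/
noncomputable def graveWord (L : Set (List A)) (w : List A) : List A :=
  (scL L w).headI

/-- group part of `f̀`. -/
noncomputable def graveG (L : Set (List A)) (f : List A → G) (w : List A) : G :=
  ((scL L w).tail.map f).prod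

/-- last coordinate (word part of `f́`). -/
noncomputable def acuteWord (L : Set (List A)) (w : List A) : List A :=
  (scL L w).getLastD []

/-- group part of `f́`. -/
noncomputable def acuteG (L : Set (List A)) (f : List A → G) (w : List A) : G :=
  ((scL L w).dropLast.map f).prod

/-- The word over `X = A ⊕ A_G` determined by a coordinate sequence:
`w₀ f(ẅ₁)f(w₁)⋯f(ẅ_m) w_m`, the middle group element written as its
chosen representative word over `A_G`. -/
def checkOfSeq (f : List A → G) (rep : G → List A_G) :
    List (List A) → List (A ⊕ A_G)
  | [] => []
  | [w] => w.map Sum.inl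
  | w :: rest =>
      w.map Sum.inl ++ (rep ((rest.dropLast.map f).prod)).map Sum.inr ++
        (rest.getLastD []).map Sum.inl

/-- longest prefix of `A`-letters. -/
def takeA : List (A ⊕ A_G) → List A
  | Sum.inl a :: r => a :: takeA r
  | _ => []

def dropA : List (A ⊕ A_G) → List (A ⊕ A_G)
  | Sum.inl _ :: r => dropA r
  | w => w

/-- longest prefix of `A_G`-letters. -/
def takeG : List (A ⊕ A_G) → List A_G
  | Sum.inr b :: r => b :: takeG r
  | _ => []

def dropG : List (A ⊕ A_G) → List (A ⊕ A_G)
  | Sum.inr _ :: r => dropG r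
  | w => w

/-- Processing of the part `g₁u₁g₂u₂⋯g_nu_n` of a mixed word: returns the group
element `eval(g₁)·f̂(u₁)·…·eval(g_n)·(acute part of u_n)` together with the final
word coordinate of `u_n`.  (Fuel-based recursion.) -/
noncomputable def midRunAux (L : Set (List A)) (f : List A → G) (evA : A_G → G) :
    ℕ → List (A ⊕ A_G) → G × List A
  | 0, _ => (1, [])
  | n + 1, w =>
      match dropA (dropG w) with
      | [] => (evalW evA (takeG w) * acuteG L f (takeA (dropG w)),
               acuteWord L (takeA (dropG w)))
      | r' => (evalW evA (takeG w) * fhat L f (takeA (dropG w)) *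
                 (midRunAux L f evA n r').1,
               (midRunAux L f evA n r').2)

/-- The extension `f̌ : X⁺ → Z ⊆ X⁺` of `f̌` to mixed words
(`f̌(u₀g₁u₁⋯g_nu_n) = f̀(u₀) g₁ f̂(u₁) ⋯ g_n f́(u_n)`, the middle group
element written as its representative word). -/
noncomputable def fcheckX (L : Set (List A)) (f : List A → G) (evA : A_G → G)
    (rep : G → List A_G) (w : List (A ⊕ A_G)) : List (A ⊕ A_G) :=
  match dropA w with
  | [] => checkOfSeq f rep (scL L (takeA w))
  | r =>
      (graveWord L (takeA w)).map Sum.inl ++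
        (rep (graveG L f (takeA w) * (midRunAux L f evA r.length r).1)).map Sum.inr ++
        (midRunAux L f evA r.length r).2.map Sum.inl

end CoreG
/-- The smallest (semigroup) congruence on words containing the relation `R`. -/
inductive Cong {X : Type*} (R : List X → List X → Prop) : List X → List X → Prop
  | of {u v : List X} : R u v → Cong R u v
  | refl (u : List X) : Cong R u u
  | symm {u v : List X} : Cong R u v → Cong R v u
  | trans {u v w : List X} : Cong R u v → Cong R v w → Cong R u w
  | left (w : List X) {u v : List X} : Cong R u v → Cong R (w ++ u) (w ++ v)
  | right (w : List X) {u v : List X} : Cong R u v → Cong R (u ++ w) (v ++ w)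

section CoreRel
variable [Group G]

/-- The relation `R = R_G ∪ R_f` over `X = A ⊕ A_G`, where
`R_f = {eue = f(u) : u ∈ L} ∪ {v̈ = v̈_α f(v̈) v̈_ω : v̈ ∈ L̈}`,
`e = rep 1` the chosen word representing `1_G`, group elements
read as their representative words. -/
inductive RelR (L : Set (List A)) (RG : List A_G → List A_G → Prop)
    (f : List A → G) (rep : G → List A_G) :
    List (A ⊕ A_G) → List (A ⊕ A_G) → Prop
  | ofG {u v : List A_G} : RG u v → RelR L RG f rep (u.map Sum.inr) (v.map Sum.inr)
  | rU {u : List A} (hu : u ∈ L) :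
      RelR L RG f rep
        ((rep 1).map Sum.inr ++ u.map Sum.inl ++ (rep 1).map Sum.inr)
        ((rep (f u)).map Sum.inr)
  | rV {v : List A} (hv : v ∈ Ddot L) :
      RelR L RG f rep (v.map Sum.inl)
        (v.dropLast.map Sum.inl ++ (rep (f v)).map Sum.inr ++ v.tail.map Sum.inl)

end CoreRel

/-!
Each relation `v̈ = v̈_α f(v̈) v̈_ω` cuts a word over `A` at an occurrence of a factor of `L̈`,
so a word over `A` equals in `T` the interleaving `w₀ f(ẅ₁) w₁ ⋯ f(ẅ_m) w_m` of its
coordinates. Representative words multiply in `T` as in `G` (by `R_G`), so after inserting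
copies of `e` every coordinate `w_i` lying between two group words is absorbed through
`e w_i e = f(w_i)`. Only the outermost coordinates of `w` survive, which is `f̌(w)`.
-/

instance {X : Type*} {R : List X → List X → Prop} :
    Trans (Cong R) (Cong R) (Cong R) :=
  ⟨Cong.trans⟩

theorem Cong.append {X : Type*} {R : List X → List X → Prop} {u u' v v' : List X}
    (hu : Cong R u u') (hv : Cong R v v') : Cong R (u ++ v) (u' ++ v') :=
  (Cong.left u hv).trans (Cong.right v' hu)

section Coordinates

variable {L : Set (List A)}

theorem two_le_length_of_not_mem (hA : ∀ a : A, [a] ∈ L) {u : List A} (hne : u ≠ [])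
    (hu : u ∉ L) : 2 ≤ u.length := by
  match u, hne, hu with
  | [a], _, hu => exact absurd (hA a) hu
  | _ :: _ :: _, _, _ => simp

theorem exists_ddot_infix (hA : ∀ a : A, [a] ∈ L) {u : List A} (hne : u ≠ [])
    (hu : u ∉ L) : ∃ v ∈ Ddot L, v <:+: u := by
  have hlen := two_le_length_of_not_mem hA hne hu
  by_cases hd : u.dropLast ∈ L
  · by_cases ht : u.tail ∈ L
    · exact ⟨u, ⟨hu, hd, ht⟩, List.infix_refl u⟩
    · obtain ⟨v, hv, hvu⟩ :=
        exists_ddot_infix hA (List.ne_nil_of_length_pos (by simp; omega)) ht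
      exact ⟨v, hv, hvu.trans (List.tail_suffix u).isInfix⟩
  · obtain ⟨v, hv, hvu⟩ :=
      exists_ddot_infix hA (List.ne_nil_of_length_pos (by simp; omega)) hd
    exact ⟨v, hv, hvu.trans (List.dropLast_prefix u).isInfix⟩
termination_by u.length
decreasing_by all_goals simp; omega

theorem ne_nil_of_mem_ddot (hE : [] ∉ L) {v : List A} (hv : v ∈ Ddot L) : v ≠ [] := by
  rintro rfl
  exact hE hv.2.1

theorem exists_isSc (hE : [] ∉ L) (hA : ∀ a : A, [a] ∈ L) {u : List A} (hne : u ≠ []) :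
    ∃ s, IsSc L u s := by
  by_cases hu : u ∈ L
  · exact ⟨[u], .base u hu⟩
  obtain ⟨v, hv, w', w'', hu_eq⟩ := exists_ddot_infix hA hne hu
  have hv2 := two_le_length_of_not_mem hA (ne_nil_of_mem_ddot hE hv) hv.1
  have hlen : u.length = w'.length + v.length + w''.length := by simp [← hu_eq, Nat.add_assoc]
  obtain ⟨s₁, h₁⟩ := exists_isSc hE hA (u := w' ++ v.dropLast)
    (List.ne_nil_of_length_pos (by simp; omega))
  obtain ⟨s₂, h₂⟩ := exists_isSc hE hA (u := v.tail ++ w'')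
    (List.ne_nil_of_length_pos (by simp; omega))
  subst hu_eq
  exact ⟨_, .step w' w'' v s₁ s₂ hv h₁ h₂⟩
termination_by u.length
decreasing_by all_goals simp; omega

theorem IsSc.ne_nil (hE : [] ∉ L) {u : List A} {s : List (List A)} (h : IsSc L u s) :
    u ≠ [] := by
  induction h with
  | base w hw => rintro rfl; exact hE hw
  | step w' w'' v _ _ hv => simp [ne_nil_of_mem_ddot hE hv]

theorem IsSc.coords_ne_nil {u : List A} {s : List (List A)} (h : IsSc L u s) : s ≠ [] := by
  cases h <;> simp

theorem scL_nil (hE : [] ∉ L) : scL L ([] : List A) = [] :=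
  dif_neg fun ⟨_, hs⟩ => hs.ne_nil hE rfl

theorem isSc_scL (hE : [] ∉ L) (hA : ∀ a : A, [a] ∈ L) {u : List A} (hne : u ≠ []) :
    IsSc L u (scL L u) := by
  have h := exists_isSc hE hA hne
  rw [scL, dif_pos h]
  exact h.choose_spec

end Coordinates

section Blocks

theorem takeA_dropA : ∀ w : List (A ⊕ A_G), (takeA w).map Sum.inl ++ dropA w = w
  | [] => rfl
  | Sum.inl a :: r => by simp [takeA, dropA, takeA_dropA r]
  | Sum.inr _ :: _ => rfl

theorem takeG_dropG : ∀ w : List (A ⊕ A_G), (takeG w).map Sum.inr ++ dropG w = w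
  | [] => rfl
  | Sum.inr b :: r => by simp [takeG, dropG, takeG_dropG r]
  | Sum.inl _ :: _ => rfl

theorem takeG_dropA_ne_nil : ∀ {w : List (A ⊕ A_G)}, dropA w ≠ [] → takeG (dropA w) ≠ []
  | [], h => absurd rfl h
  | Sum.inl _ :: r, h => takeG_dropA_ne_nil (w := r) h
  | Sum.inr _ :: _, _ => by simp [dropA, takeG]

theorem length_dropA_le : ∀ w : List (A ⊕ A_G), (dropA w).length ≤ w.length
  | [] => le_rfl
  | Sum.inl _ :: r => (length_dropA_le r).trans (Nat.le_succ _)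
  | Sum.inr _ :: _ => le_rfl

theorem length_dropG_lt {w : List (A ⊕ A_G)} (h : takeG w ≠ []) :
    (dropG w).length < w.length := by
  have hlen := congrArg List.length (takeG_dropG w)
  have hpos := List.length_pos_of_ne_nil h
  simp only [List.length_append, List.length_map] at hlen
  omega

end Blocks

section Congruence

variable [Group G] {L : Set (List A)} {RG : List A_G → List A_G → Prop}
  {f : List A → G} {rep : G → List A_G}

local notation:50 u " ≡ᵀ " v => Cong (RelR L RG f rep) u v
local notation "⌜" g "⌝" => List.map (Sum.inr (α := A)) (rep g)

theorem cong_map_inr {u v : List A_G} (h : Cong RG u v) : u.map Sum.inr ≡ᵀ v.map Sum.inr := by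
  induction h with
  | of h => exact .of (.ofG h)
  | refl u => exact .refl _
  | symm _ ih => exact ih.symm
  | trans _ _ ih₁ ih₂ => exact ih₁.trans ih₂
  | left w _ ih => simpa using Cong.left (w.map Sum.inr) ih
  | right w _ ih => simpa using Cong.right (w.map Sum.inr) ih

theorem cong_evalW {evA : A_G → G}
    (hpres : ∀ u v : List A_G, u ≠ [] → v ≠ [] → evalW evA u = evalW evA v → Cong RG u v)
    (hrepne : ∀ g : G, rep g ≠ []) (hrep : ∀ g : G, evalW evA (rep g) = g)
    {u : List A_G} (hu : u ≠ []) : u.map Sum.inr ≡ᵀ ⌜evalW evA u⌝ :=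
  cong_map_inr (hpres _ _ hu (hrepne _) (hrep _).symm)

theorem cong_split_ddot {v : List A} (hv : v ∈ Ddot L) (w' w'' : List A) :
    (w' ++ v ++ w'').map Sum.inl ≡ᵀ
      (w' ++ v.dropLast).map Sum.inl ++ ⌜f v⌝ ++ (v.tail ++ w'').map Sum.inl := by
  simpa only [List.map_append, List.append_assoc] using
    Cong.left (w'.map Sum.inl) (Cong.right (w''.map Sum.inl) (.of (RelR.rV hv)))

theorem cong_sandwich_of_mem (hmul : ∀ g h : G, ⌜g⌝ ++ ⌜h⌝ ≡ᵀ ⌜g * h⌝) {w : List A}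
    (hw : w ∈ L) (g k : G) : ⌜g⌝ ++ w.map Sum.inl ++ ⌜k⌝ ≡ᵀ ⌜g * f w * k⌝ := by
  have hg : ⌜g⌝ ≡ᵀ ⌜g⌝ ++ ⌜1⌝ := by simpa using (hmul g 1).symm
  have hk : ⌜k⌝ ≡ᵀ ⌜1⌝ ++ ⌜k⌝ := by simpa using (hmul 1 k).symm
  calc ⌜g⌝ ++ w.map Sum.inl ++ ⌜k⌝
      ≡ᵀ ⌜g⌝ ++ ⌜1⌝ ++ w.map Sum.inl ++ (⌜1⌝ ++ ⌜k⌝) := (hg.append (.refl _)).append hk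
    _ = ⌜g⌝ ++ (⌜1⌝ ++ w.map Sum.inl ++ ⌜1⌝) ++ ⌜k⌝ := by simp only [List.append_assoc]
    _ ≡ᵀ ⌜g⌝ ++ ⌜f w⌝ ++ ⌜k⌝ := .right _ (.left _ (.of (.rU hw)))
    _ ≡ᵀ ⌜g * f w * k⌝ := (Cong.right _ (hmul g (f w))).trans (hmul _ k)

theorem IsSc.cong_sandwich (hmul : ∀ g h : G, ⌜g⌝ ++ ⌜h⌝ ≡ᵀ ⌜g * h⌝) {u : List A}
    {s : List (List A)} (h : IsSc L u s) (g k : G) :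
    ⌜g⌝ ++ u.map Sum.inl ++ ⌜k⌝ ≡ᵀ ⌜g * (s.map f).prod * k⌝ := by
  induction h generalizing g k with
  | base w hw => simpa using cong_sandwich_of_mem hmul hw g k
  | step w' w'' v s₁ s₂ hv _ _ ih₁ ih₂ =>
    calc ⌜g⌝ ++ (w' ++ v ++ w'').map Sum.inl ++ ⌜k⌝
        ≡ᵀ ⌜g⌝ ++ ((w' ++ v.dropLast).map Sum.inl ++ ⌜f v⌝ ++ (v.tail ++ w'').map Sum.inl)
            ++ ⌜k⌝ := .right _ (.left _ (cong_split_ddot hv w' w''))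
      _ = ⌜g⌝ ++ (w' ++ v.dropLast).map Sum.inl ++ ⌜f v⌝ ++ (v.tail ++ w'').map Sum.inl
            ++ ⌜k⌝ := by simp only [List.append_assoc]
      _ ≡ᵀ ⌜g * (s₁.map f).prod * f v⌝ ++ (v.tail ++ w'').map Sum.inl ++ ⌜k⌝ :=
        .right _ (.right _ (ih₁ g (f v)))
      _ ≡ᵀ ⌜g * ((s₁ ++ v :: s₂).map f).prod * k⌝ := by
        simpa [List.prod_append, mul_assoc] using ih₂ (g * (s₁.map f).prod * f v) k

theorem IsSc.cong_left (hmul : ∀ g h : G, ⌜g⌝ ++ ⌜h⌝ ≡ᵀ ⌜g * h⌝) {u : List A}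
    {s : List (List A)} (h : IsSc L u s) (g : G) :
    ⌜g⌝ ++ u.map Sum.inl ≡ᵀ ⌜g * (s.dropLast.map f).prod⌝ ++ (s.getLastD []).map Sum.inl := by
  induction h generalizing g with
  | base w hw => simpa using Cong.refl (⌜g⌝ ++ w.map Sum.inl)
  | step w' w'' v s₁ s₂ hv h₁ h₂ _ ih₂ =>
    calc ⌜g⌝ ++ (w' ++ v ++ w'').map Sum.inl
        ≡ᵀ ⌜g⌝ ++ ((w' ++ v.dropLast).map Sum.inl ++ ⌜f v⌝ ++ (v.tail ++ w'').map Sum.inl) :=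
          .left _ (cong_split_ddot hv w' w'')
      _ = ⌜g⌝ ++ (w' ++ v.dropLast).map Sum.inl ++ ⌜f v⌝ ++ (v.tail ++ w'').map Sum.inl := by
          simp only [List.append_assoc]
      _ ≡ᵀ ⌜g * (s₁.map f).prod * f v⌝ ++ (v.tail ++ w'').map Sum.inl :=
        .right _ (h₁.cong_sandwich hmul g (f v))
      _ ≡ᵀ ⌜g * ((s₁ ++ v :: s₂).dropLast.map f).prod⌝
            ++ ((s₁ ++ v :: s₂).getLastD []).map Sum.inl := by
        obtain ⟨x, t, rfl⟩ := List.exists_cons_of_ne_nil h₂.coords_ne_nil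
        simpa [List.prod_append, mul_assoc, List.getLast?_cons] using
          ih₂ (g * (s₁.map f).prod * f v)

theorem IsSc.cong_right (hmul : ∀ g h : G, ⌜g⌝ ++ ⌜h⌝ ≡ᵀ ⌜g * h⌝) {u : List A}
    {s : List (List A)} (h : IsSc L u s) (k : G) :
    u.map Sum.inl ++ ⌜k⌝ ≡ᵀ s.headI.map Sum.inl ++ ⌜(s.tail.map f).prod * k⌝ := by
  induction h generalizing k with
  | base w hw => simpa using Cong.refl (w.map Sum.inl ++ ⌜k⌝)
  | step w' w'' v s₁ s₂ hv h₁ h₂ ih₁ _ =>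
    calc (w' ++ v ++ w'').map Sum.inl ++ ⌜k⌝
        ≡ᵀ (w' ++ v.dropLast).map Sum.inl ++ ⌜f v⌝ ++ (v.tail ++ w'').map Sum.inl ++ ⌜k⌝ :=
          .right _ (cong_split_ddot hv w' w'')
      _ ≡ᵀ (w' ++ v.dropLast).map Sum.inl ++ ⌜f v * (s₂.map f).prod * k⌝ := by
          simpa only [List.append_assoc] using
            Cong.left ((w' ++ v.dropLast).map Sum.inl) (h₂.cong_sandwich hmul (f v) k)
      _ ≡ᵀ (s₁ ++ v :: s₂).headI.map Sum.inl
            ++ ⌜((s₁ ++ v :: s₂).tail.map f).prod * k⌝ := by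
          obtain ⟨x, t, rfl⟩ := List.exists_cons_of_ne_nil h₁.coords_ne_nil
          simpa [List.prod_append, mul_assoc] using ih₁ (f v * (s₂.map f).prod * k)

theorem checkOfSeq_cons_of_ne_nil (w : List A) {rest : List (List A)} (h : rest ≠ []) :
    checkOfSeq f rep (w :: rest) =
      w.map Sum.inl ++ ⌜(rest.dropLast.map f).prod⌝ ++ (rest.getLastD []).map Sum.inl := by
  obtain ⟨x, t, rfl⟩ := List.exists_cons_of_ne_nil h
  rfl

theorem IsSc.cong_checkOfSeq (hmul : ∀ g h : G, ⌜g⌝ ++ ⌜h⌝ ≡ᵀ ⌜g * h⌝) {u : List A}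
    {s : List (List A)} (h : IsSc L u s) : u.map Sum.inl ≡ᵀ checkOfSeq f rep s := by
  cases h with
  | base w hw => exact .refl _
  | step w' w'' v s₁ s₂ hv h₁ h₂ =>
    obtain ⟨x, t, rfl⟩ := List.exists_cons_of_ne_nil h₁.coords_ne_nil
    obtain ⟨y, r, rfl⟩ := List.exists_cons_of_ne_nil h₂.coords_ne_nil
    calc (w' ++ v ++ w'').map Sum.inl
        ≡ᵀ (w' ++ v.dropLast).map Sum.inl ++ ⌜f v⌝ ++ (v.tail ++ w'').map Sum.inl :=
          cong_split_ddot hv w' w''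
      _ ≡ᵀ x.map Sum.inl ++ ⌜(t.map f).prod * f v⌝ ++ (v.tail ++ w'').map Sum.inl := by
          simpa using Cong.right ((v.tail ++ w'').map Sum.inl) (h₁.cong_right hmul (f v))
      _ ≡ᵀ x.map Sum.inl ++ ⌜(t.map f).prod * f v * ((y :: r).dropLast.map f).prod⌝
            ++ ((y :: r).getLastD []).map Sum.inl := by
          simpa only [List.append_assoc] using
            Cong.left (x.map Sum.inl) (h₂.cong_left hmul ((t.map f).prod * f v))
      _ = checkOfSeq f rep (x :: t ++ v :: y :: r) := by
          rw [List.cons_append, checkOfSeq_cons_of_ne_nil _ (by simp)]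
          simp [List.dropLast_append_of_ne_nil, List.prod_append, mul_assoc, List.getLast?_cons]

theorem cong_rep_mul {evA : A_G → G}
    (hpres : ∀ u v : List A_G, u ≠ [] → v ≠ [] → evalW evA u = evalW evA v → Cong RG u v)
    (hrepne : ∀ g : G, rep g ≠ []) (hrep : ∀ g : G, evalW evA (rep g) = g) (g h : G) :
    ⌜g⌝ ++ ⌜h⌝ ≡ᵀ ⌜g * h⌝ := by
  have heval : evalW evA (rep g ++ rep h) = g * h := by
    rw [evalW, List.map_append, List.prod_append]
    exact congrArg₂ (· * ·) (hrep g) (hrep h)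
  simpa [heval] using
    cong_evalW (L := L) (f := f) hpres hrepne hrep (u := rep g ++ rep h) (by simp [hrepne])

theorem cong_fhat (hE : [] ∉ L) (hA : ∀ a : A, [a] ∈ L)
    (hmul : ∀ g h : G, ⌜g⌝ ++ ⌜h⌝ ≡ᵀ ⌜g * h⌝) (u : List A) (g k : G) :
    ⌜g⌝ ++ u.map Sum.inl ++ ⌜k⌝ ≡ᵀ ⌜g * fhat L f u * k⌝ := by
  rcases eq_or_ne u [] with rfl | hu
  · simpa [fhat, scL_nil hE] using hmul g k
  · exact (isSc_scL hE hA hu).cong_sandwich hmul g k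

theorem cong_acute (hE : [] ∉ L) (hA : ∀ a : A, [a] ∈ L)
    (hmul : ∀ g h : G, ⌜g⌝ ++ ⌜h⌝ ≡ᵀ ⌜g * h⌝) (u : List A) (g : G) :
    ⌜g⌝ ++ u.map Sum.inl ≡ᵀ ⌜g * acuteG L f u⌝ ++ (acuteWord L u).map Sum.inl := by
  rcases eq_or_ne u [] with rfl | hu
  · simpa [acuteG, acuteWord, scL_nil hE] using Cong.refl (R := RelR L RG f rep) ⌜g⌝
  · exact (isSc_scL hE hA hu).cong_left hmul g

theorem cong_grave (hE : [] ∉ L) (hA : ∀ a : A, [a] ∈ L)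
    (hmul : ∀ g h : G, ⌜g⌝ ++ ⌜h⌝ ≡ᵀ ⌜g * h⌝) (u : List A) (k : G) :
    u.map Sum.inl ++ ⌜k⌝ ≡ᵀ (graveWord L u).map Sum.inl ++ ⌜graveG L f u * k⌝ := by
  rcases eq_or_ne u [] with rfl | hu
  · have hhead : ([] : List (List A)).headI = [] := rfl
    simpa [graveG, graveWord, scL_nil hE, hhead] using Cong.refl (R := RelR L RG f rep) ⌜k⌝
  · exact (isSc_scL hE hA hu).cong_right hmul k

theorem cong_checkOfSeq_scL (hE : [] ∉ L) (hA : ∀ a : A, [a] ∈ L)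
    (hmul : ∀ g h : G, ⌜g⌝ ++ ⌜h⌝ ≡ᵀ ⌜g * h⌝) (u : List A) :
    u.map Sum.inl ≡ᵀ checkOfSeq f rep (scL L u) := by
  rcases eq_or_ne u [] with rfl | hu
  · rw [scL_nil hE]
    exact .refl _
  · exact (isSc_scL hE hA hu).cong_checkOfSeq hmul

theorem cong_midRunAux (hE : [] ∉ L) (hA : ∀ a : A, [a] ∈ L) {evA : A_G → G}
    (hev : ∀ u : List A_G, u ≠ [] → u.map Sum.inr ≡ᵀ ⌜evalW evA u⌝)
    (hmul : ∀ g h : G, ⌜g⌝ ++ ⌜h⌝ ≡ᵀ ⌜g * h⌝) :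
    ∀ (n : ℕ) (r : List (A ⊕ A_G)), takeG r ≠ [] → r.length ≤ n →
      r ≡ᵀ ⌜(midRunAux L f evA n r).1⌝ ++ (midRunAux L f evA n r).2.map Sum.inl
  | 0, r, hr, hlen => by
    obtain rfl : r = [] := List.eq_nil_of_length_eq_zero (Nat.le_zero.mp hlen)
    exact absurd rfl hr
  | n + 1, r, hr, hlen => by
    have hblock : r ≡ᵀ ⌜evalW evA (takeG r)⌝
        ++ ((takeA (dropG r)).map Sum.inl ++ dropA (dropG r)) := by
      rw [takeA_dropA]
      conv_lhs => rw [← takeG_dropG r]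
      exact .right _ (hev _ hr)
    cases hr' : dropA (dropG r) with
    | nil =>
      simp only [midRunAux, hr']
      rw [hr', List.append_nil] at hblock
      exact hblock.trans (cong_acute hE hA hmul _ _)
    | cons x rest =>
      have hG : takeG (x :: rest) ≠ [] := hr' ▸ takeG_dropA_ne_nil (by simp [hr'])
      have hlen' : (x :: rest).length ≤ n := by
        have := length_dropA_le (dropG r)
        have := length_dropG_lt hr
        rw [hr'] at *
        omega
      simp only [midRunAux, hr']
      rw [hr'] at hblock
      calc r
          ≡ᵀ ⌜evalW evA (takeG r)⌝ ++ ((takeA (dropG r)).map Sum.inl ++ (x :: rest)) := hblock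
        _ ≡ᵀ ⌜evalW evA (takeG r)⌝ ++ ((takeA (dropG r)).map Sum.inl
              ++ (⌜(midRunAux L f evA n (x :: rest)).1⌝
                ++ (midRunAux L f evA n (x :: rest)).2.map Sum.inl)) :=
            .left _ (.left _ (cong_midRunAux hE hA hev hmul n _ hG hlen'))
        _ ≡ᵀ _ := by
            simpa only [List.append_assoc] using
              Cong.right ((midRunAux L f evA n (x :: rest)).2.map Sum.inl)
                (cong_fhat hE hA hmul (takeA (dropG r)) (evalW evA (takeG r))
                  (midRunAux L f evA n (x :: rest)).1)

end Congruence

theorem word_eq_fcheck_in_T_general [Group G]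
    (L : Set (List A)) (hE : [] ∉ L)
    (hA : ∀ a : A, [a] ∈ L)
    (RG : List A_G → List A_G → Prop) (evA : A_G → G)
    (hpres : ∀ u v : List A_G, u ≠ [] → v ≠ [] →
      (Cong RG u v ↔ evalW evA u = evalW evA v))
    (rep : G → List A_G) (hrepne : ∀ g : G, rep g ≠ [])
    (hrep : ∀ g : G, evalW evA (rep g) = g)
    (f : List A → G)
    (w : List (A ⊕ A_G)) :
    Cong (RelR L RG f rep) w (fcheckX L f evA rep w) := by
  have hpres' u v hu hv := (hpres u v hu hv).2
  have hmul := cong_rep_mul (L := L) (f := f) hpres' hrepne hrep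
  have hdec := takeA_dropA w
  cases hr : dropA w with
  | nil =>
    simp only [fcheckX, hr]
    rw [hr, List.append_nil] at hdec
    conv_lhs => rw [← hdec]
    exact cong_checkOfSeq_scL hE hA hmul _
  | cons x rest =>
    simp only [fcheckX, hr]
    rw [hr] at hdec
    have hG : takeG (x :: rest) ≠ [] := hr ▸ takeG_dropA_ne_nil (by simp [hr])
    have hmid := cong_midRunAux hE hA (fun u hu => cong_evalW hpres' hrepne hrep hu) hmul
      _ (x :: rest) hG le_rfl
    conv_lhs => rw [← hdec]
    refine (Cong.left _ hmid).trans ?_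
    simpa only [List.append_assoc] using Cong.right _ (cong_grave hE hA hmul (takeA w) _)

/-- Lemma 2. For every word `w ∈ X⁺`, `w = f̌(w)` in `T`;
that is, the pair `(w, f̌(w))` belongs to the congruence `ρ_R` on `X⁺`. -/
theorem word_eq_fcheck_in_T [Nonempty A] [Group G]
    (L : Set (List A)) (hE : [] ∉ L)
    (hFac : ∀ u w : List A, w ∈ L → u ≠ [] → u <:+: w → u ∈ L)
    (hA : ∀ a : A, [a] ∈ L)
    (RG : List A_G → List A_G → Prop) (evA : A_G → G)
    (hRGne : ∀ u v : List A_G, RG u v → u ≠ [] ∧ v ≠ [])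
    (hpres : ∀ u v : List A_G, u ≠ [] → v ≠ [] →
      (Cong RG u v ↔ evalW evA u = evalW evA v))
    (rep : G → List A_G) (hrepne : ∀ g : G, rep g ≠ [])
    (hrep : ∀ g : G, evalW evA (rep g) = g)
    (f : List A → G)
    (w : List (A ⊕ A_G)) (hw : w ≠ []) :
    Cong (RelR L RG f rep) w (fcheckX L f evA rep w) :=
  word_eq_fcheck_in_T_general L hE hA RG evA hpres rep hrepne hrep f w
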